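/- For all optimization problems P and Q (both interpreted as CO problems or both interpreted as ASO problems), P ≡^s Q (that is, P ≡^{s,[1,∞]} Q) if and only if: (1) μ(P) = μ(Q); (2) (>^P)_{μ(P)} = (>^Q)_{μ(Q)}; and (3) for every I, J ∈ μ(P), diff^P(I,J) = diff^Q(I,J). -/

import Mathlib

open scoped Classical

/-- Propositional formulas over a universe `U` of atoms, built from atoms,
`⊥`, conjunction, disjunction and implication. -/
inductive Formula (U : Type) : Type where
  | atom : U → Formula U
  | bot  : Formula U
  | conj : Formula U → Formula U → Formula U
  | disj : Formula U → Formula U → Formula U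
  | imp  : Formula U → Formula U → Formula U

variable {U : Type}

/-- Classical satisfaction `I ⊨ φ`. -/
def Sat (I : Set U) : Formula U → Prop
  | .atom a => a ∈ I
  | .bot => False
  | .conj φ ψ => Sat I φ ∧ Sat I ψ
  | .disj φ ψ => Sat I φ ∨ Sat I ψ
  | .imp φ ψ => Sat I φ → Sat I ψ

/-- Classical satisfaction of a theory. -/
def SatTheory (I : Set U) (T : Set (Formula U)) : Prop := ∀ φ ∈ T, Sat I φ

/-- `Mod T`: the classical models of a theory `T`. -/
def models (T : Set (Formula U)) : Set (Set U) := {I | SatTheory I T}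

/-- HT-satisfaction `⟨I, J⟩ ⊨_HT φ` (for `I ⊆ J`). -/
def SatHT (I J : Set U) : Formula U → Prop
  | .atom a => a ∈ I
  | .bot => False
  | .conj φ ψ => SatHT I J φ ∧ SatHT I J ψ
  | .disj φ ψ => SatHT I J φ ∨ SatHT I J ψ
  | .imp φ ψ => Sat J (Formula.imp φ ψ) ∧ (¬ SatHT I J φ ∨ SatHT I J ψ)

/-- HT-satisfaction of a theory. -/
def SatHTTheory (I J : Set U) (T : Set (Formula U)) : Prop := ∀ φ ∈ T, SatHT I J φ

/-- `HT T`: the set of HT-models `⟨I,J⟩` (with `I ⊆ J`) of a theory `T`. -/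
def HTmod (T : Set (Formula U)) : Set (Set U × Set U) :=
  {p | p.1 ⊆ p.2 ∧ SatHTTheory p.1 p.2 T}

/-- `AS T`: the equilibrium models (answer sets) of a theory `T`. -/
def AS (T : Set (Formula U)) : Set (Set U) :=
  {I | SatHTTheory I I T ∧ ∀ J : Set U, J ⊂ I → ¬ SatHTTheory J I T}

/-- A ranked preference rule `φ₁ > ⋯ > φₖ ←ʲ ψ` with nonempty head and rank `j ≥ 1`. -/
structure Rule (U : Type) : Type where
  head : List (Formula U)
  body : Formula U
  rank : ℕ
  head_ne : head ≠ []
  rank_pos : 1 ≤ rank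

/-- Satisfaction degree `v_I(r)`: the least (1-based) index of a satisfied head formula
if `I` satisfies the body and some head formula; `1` otherwise. -/
noncomputable def degree (I : Set U) (r : Rule U) : ℕ :=
  if Sat I r.body ∧ ∃ φ ∈ r.head, Sat I φ then
    sInf {n : ℕ | ∃ k : Fin r.head.length, n = k.1 + 1 ∧ Sat I (r.head.get k)}
  else 1

/-- The strict preference `I >^S J` induced by a selector `S`. -/
def gtSel (S : Set (Rule U)) (I J : Set U) : Prop :=
  ∃ r' ∈ S, degree I r' < degree J r' ∧
    (∀ r ∈ S, r.rank = r'.rank → degree I r ≤ degree J r) ∧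
    (∀ r ∈ S, r.rank < r'.rank → degree I r = degree J r)

/-- The indifference `I ≈^S J` induced by a selector `S`. -/
def simSel (S : Set (Rule U)) (I J : Set U) : Prop :=
  ∀ r ∈ S, degree I r = degree J r

/-- The preference `I ≥^S J` induced by a selector `S`. -/
def geSel (S : Set (Rule U)) (I J : Set U) : Prop :=
  simSel S I J ∨ gtSel S I J

/-- An optimization problem: a generator theory plus a finite selector. -/
structure OptProblem (U : Type) : Type where
  gen : Set (Formula U)
  sel : Set (Rule U)
  sel_finite : sel.Finite

/-- Union of optimization problems. -/
def OptProblem.union (P Q : OptProblem U) : OptProblem U :=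
  ⟨P.gen ∪ Q.gen, P.sel ∪ Q.sel, P.sel_finite.union Q.sel_finite⟩

/-- `P_{<i}`: the restriction of `P` to preference rules of rank `< i`. -/
def OptProblem.below (P : OptProblem U) (i : ℕ) : OptProblem U :=
  ⟨P.gen, {r ∈ P.sel | r.rank < i}, P.sel_finite.subset (Set.sep_subset _ _)⟩

/-- The two semantics for generators: classical (CO problems) and
equilibrium-model/answer-set (ASO problems). -/
inductive Sem : Type where
  | co : Sem
  | aso : Sem

/-- `μ(P)`: the outcomes of `P` under the chosen semantics. -/
def outcomes (sem : Sem) (P : OptProblem U) : Set (Set U) :=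
  match sem with
  | Sem.co => models P.gen
  | Sem.aso => AS P.gen

/-- `π(P)`: the preferred (optimal) outcomes of `P`. -/
def pref (sem : Sem) (P : OptProblem U) : Set (Set U) :=
  {I | I ∈ outcomes sem P ∧ ¬ ∃ J ∈ outcomes sem P, gtSel P.sel J I}

/-- `diff^P(I,J)`: the largest `k` with `I ≈^{P_{<k}} J` (`∞` if this holds for all `k`). -/
noncomputable def diff (P : OptProblem U) (I J : Set U) : ℕ∞ :=
  if ∀ k : ℕ, simSel (P.below k).sel I J then ⊤
  else ((sSup {k : ℕ | simSel (P.below k).sel I J} : ℕ) : ℕ∞)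

/-- Restriction `≻_V` of a relation on interpretations to a set `V` of interpretations. -/
def restrictRel (rel : Set U → Set U → Prop) (V : Set (Set U)) : Set U → Set U → Prop :=
  fun A B => rel A B ∧ A ∈ V ∧ B ∈ V

/-- All rules of `S` have rank in the interval `[i,j]` (`j` may be `∞`). -/
def inRankInterval (i : ℕ) (j : ℕ∞) (S : Set (Rule U)) : Prop :=
  ∀ r ∈ S, i ≤ r.rank ∧ (r.rank : ℕ∞) ≤ j

/-- Strong sel-equivalence `P ≡^{s,[i,j]} Q`: same preferred outcomes under addition of any
context from `L^{s,[i,j]}` (empty generator, selector with ranks in `[i,j]`). -/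
def seqv (sem : Sem) (i : ℕ) (j : ℕ∞) (P Q : OptProblem U) : Prop :=
  ∀ R : OptProblem U, R.gen = ∅ → inRankInterval i j R.sel →
    pref sem (P.union R) = pref sem (Q.union R)

/-- Strong gen-equivalence `P ≡_g Q`: same preferred outcomes under addition of any
generator context from `L^g` (empty selector). -/
def geqv (sem : Sem) (P Q : OptProblem U) : Prop :=
  ∀ R : OptProblem U, R.sel = ∅ →
    pref sem (P.union R) = pref sem (Q.union R)

/-- Strong (combined) equivalence `P ≡^{s,[i,j]}_g Q`: same preferred outcomes under addition
of any context from `L^{[i,j]}` (arbitrary generator, selector with ranks in `[i,j]`). -/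
def sgeqv (sem : Sem) (i : ℕ) (j : ℕ∞) (P Q : OptProblem U) : Prop :=
  ∀ R : OptProblem U, inRankInterval i j R.sel →
    pref sem (P.union R) = pref sem (Q.union R)

/-!
Adding a context with empty generator leaves the outcomes unchanged, and whether `I` beats `J`
under `S ∪ R` is decided at the first rank where `S ∪ R` separates them; so it depends on `S`
only through `>^S` and the ranks below which `S` does not separate `I` and `J`, i.e. `diff`.

Conversely, only finitely many formulas occur in `P` and `Q`. One rank-`1` rule preferring the
interpretations that satisfy exactly the same of these formulas as `I` or as `J` isolates the
pair: any other outcome loses at rank `1`, and the remaining ones behave like `I` or like `J`.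
Then `J` is preferred iff `I` does not beat `J`, which gives `μ(P) = μ(Q)` and `>^P = >^Q`; and
a rule of rank `m` preferring `I` detects a first rank `m` at which `Q` separates `I` and `J`
but `P` does not.
-/

namespace Formula

def top : Formula U := .imp .bot .bot

def neg (φ : Formula U) : Formula U := .imp φ .bot

def bigConj : List (Formula U) → Formula U
  | [] => top
  | φ :: l => .conj φ (bigConj l)

noncomputable def literal (Y : Set U) (φ : Formula U) : Formula U := if Sat Y φ then φ else φ.neg

noncomputable def characteristic (F : Finset (Formula U)) (Y : Set U) : Formula U :=
  bigConj (F.toList.map (literal Y))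

end Formula

open Formula

@[simp] lemma sat_top (K : Set U) : Sat K (top : Formula U) := id

@[simp] lemma sat_neg {K : Set U} {φ : Formula U} : Sat K φ.neg ↔ ¬ Sat K φ := Iff.rfl

@[simp] lemma sat_disj {K : Set U} {φ ψ : Formula U} : Sat K (.disj φ ψ) ↔ Sat K φ ∨ Sat K ψ :=
  Iff.rfl

lemma sat_bigConj {K : Set U} : ∀ {l : List (Formula U)}, Sat K (bigConj l) ↔ ∀ φ ∈ l, Sat K φ
  | [] => by simp [bigConj]
  | φ :: l => by simp [bigConj, Sat, sat_bigConj]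

lemma sat_literal {K Y : Set U} {φ : Formula U} : Sat K (literal Y φ) ↔ (Sat K φ ↔ Sat Y φ) := by
  unfold literal
  split_ifs with h <;> simp [h]

def SatEquiv (F : Finset (Formula U)) (K X : Set U) : Prop := ∀ φ ∈ F, Sat K φ ↔ Sat X φ

lemma SatEquiv.refl (F : Finset (Formula U)) (X : Set U) : SatEquiv F X X :=
  fun _ _ => Iff.rfl

lemma sat_characteristic {F : Finset (Formula U)} {K Y : Set U} :
    Sat K (characteristic F Y) ↔ SatEquiv F K Y := by
  simp [characteristic, sat_bigConj, sat_literal, SatEquiv]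

lemma degree_congr {K X : Set U} {r : Rule U} (hbody : Sat K r.body ↔ Sat X r.body)
    (hhead : ∀ φ ∈ r.head, Sat K φ ↔ Sat X φ) : degree K r = degree X r := by
  have hget (k : Fin r.head.length) : Sat K (r.head.get k) ↔ Sat X (r.head.get k) :=
    hhead _ (List.get_mem _ _)
  simp only [degree, hbody, hget, exists_congr fun φ => and_congr_right (hhead φ)]

def Rule.prefer (φ : Formula U) (ℓ : ℕ) (hℓ : 1 ≤ ℓ) : Rule U :=
  ⟨[φ, top], top, ℓ, List.cons_ne_nil _ _, hℓ⟩

lemma degree_prefer (K : Set U) (φ : Formula U) (ℓ : ℕ) (hℓ : 1 ≤ ℓ) :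
    degree K (Rule.prefer φ ℓ hℓ) = if Sat K φ then 1 else 2 := by
  have hcond : Sat K (Rule.prefer φ ℓ hℓ).body ∧ ∃ ψ ∈ (Rule.prefer φ ℓ hℓ).head, Sat K ψ :=
    ⟨id, top, by simp [Rule.prefer], id⟩
  rw [degree, if_pos hcond]
  split_ifs with h
  · exact le_antisymm (Nat.sInf_le ⟨⟨0, by simp [Rule.prefer]⟩, rfl, h⟩)
      (le_csInf ⟨1, ⟨0, by simp [Rule.prefer]⟩, rfl, h⟩ fun n ⟨k, hk, _⟩ => by omega)
  · refine le_antisymm (Nat.sInf_le ⟨⟨1, by simp [Rule.prefer]⟩, rfl, id⟩)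
      (le_csInf ⟨2, ⟨1, by simp [Rule.prefer]⟩, rfl, id⟩ ?_)
    rintro n ⟨⟨_ | _ | k, hk⟩, rfl, hsat⟩
    · exact absurd hsat h
    · exact le_rfl
    · simp [Rule.prefer] at hk

section Selector

variable {S R : Set (Rule U)} {I J K : Set U}

def AgreeBelow (S : Set (Rule U)) (k : ℕ) (I J : Set U) : Prop :=
  ∀ r ∈ S, r.rank < k → degree I r = degree J r

def LevelLE (S : Set (Rule U)) (j : ℕ) (I J : Set U) : Prop :=
  ∀ r ∈ S, r.rank = j → degree I r ≤ degree J r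

lemma AgreeBelow.mono {k k' : ℕ} (h : AgreeBelow S k I J) (hk : k' ≤ k) : AgreeBelow S k' I J :=
  fun r hr hrk => h r hr (hrk.trans_le hk)

lemma AgreeBelow.symm {k : ℕ} (h : AgreeBelow S k I J) : AgreeBelow S k J I :=
  fun r hr hrk => (h r hr hrk).symm

lemma agreeBelow_one (S : Set (Rule U)) (I J : Set U) : AgreeBelow S 1 I J :=
  fun r _ hr => absurd r.rank_pos (by omega)

lemma agreeBelow_union {k : ℕ} :
    AgreeBelow (S ∪ R) k I J ↔ AgreeBelow S k I J ∧ AgreeBelow R k I J := by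
  simp only [AgreeBelow, Set.mem_union, or_imp, forall_and]

lemma levelLE_union {j : ℕ} : LevelLE (S ∪ R) j I J ↔ LevelLE S j I J ∧ LevelLE R j I J := by
  simp only [LevelLE, Set.mem_union, or_imp, forall_and]

lemma gtSel_irrefl (S : Set (Rule U)) (I : Set U) : ¬ gtSel S I I :=
  fun ⟨_, _, h, _⟩ => lt_irrefl _ h

lemma gtSel_of_simSel_left (hK : simSel S K I) (h : gtSel S K J) : gtSel S I J := by
  obtain ⟨r', hr', hlt, hle, heq⟩ := h
  refine ⟨r', hr', hK r' hr' ▸ hlt, fun r hr hrk => ?_, fun r hr hrk => ?_⟩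
  · exact hK r hr ▸ hle r hr hrk
  · exact hK r hr ▸ heq r hr hrk

lemma gtSel_iff : gtSel S I J ↔
    ∃ j, AgreeBelow S j I J ∧ ¬ AgreeBelow S (j + 1) I J ∧ LevelLE S j I J := by
  constructor
  · rintro ⟨r', hr', hlt, hle, heq⟩
    exact ⟨r'.rank, heq, fun h => hlt.ne (h r' hr' (Nat.lt_succ_self _)), hle⟩
  · rintro ⟨j, hbelow, hnext, hle⟩
    obtain ⟨r, hr, hrj, hne⟩ : ∃ r ∈ S, r.rank < j + 1 ∧ degree I r ≠ degree J r := by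
      simpa [AgreeBelow] using hnext
    have hrank : r.rank = j := by
      by_contra h
      exact hne (hbelow r hr (by omega))
    exact ⟨r, hr, (hle r hr hrank).lt_of_ne hne, fun r₁ hr₁ h => hle r₁ hr₁ (h.trans hrank),
      fun r₁ hr₁ h => hbelow r₁ hr₁ (hrank ▸ h)⟩

lemma levelLE_iff {j : ℕ} (h : AgreeBelow S j I J) :
    LevelLE S j I J ↔ AgreeBelow S (j + 1) I J ∨ gtSel S I J := by
  constructor
  · intro hle
    by_cases hnext : AgreeBelow S (j + 1) I J
    · exact Or.inl hnext
    · exact Or.inr (gtSel_iff.2 ⟨j, h, hnext, hle⟩)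
  · rintro (hnext | hgt) r hr hrj
    · exact (hnext r hr (by omega)).le
    · obtain ⟨j', hbelow', hnext', hle'⟩ := gtSel_iff.1 hgt
      rcases lt_trichotomy j' j with hlt | rfl | hlt
      · exact absurd (h.mono hlt) hnext'
      · exact hle' r hr hrj
      · exact (hbelow' r hr (by omega)).le

lemma gtSel_union_iff : gtSel (S ∪ R) I J ↔ ∃ j, AgreeBelow S j I J ∧ AgreeBelow R j I J ∧
    ¬ (AgreeBelow S (j + 1) I J ∧ AgreeBelow R (j + 1) I J) ∧
    (AgreeBelow S (j + 1) I J ∨ gtSel S I J) ∧ LevelLE R j I J := by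
  simp only [gtSel_iff (S := S ∪ R), agreeBelow_union, levelLE_union]
  refine exists_congr fun j => ⟨?_, ?_⟩
  · rintro ⟨⟨hS, hR⟩, hnext, hleS, hleR⟩
    exact ⟨hS, hR, hnext, (levelLE_iff hS).1 hleS, hleR⟩
  · rintro ⟨hS, hR, hnext, hleS, hleR⟩
    exact ⟨⟨hS, hR⟩, hnext, (levelLE_iff hS).2 hleS, hleR⟩

lemma gtSel_union_congr {S₁ S₂ : Set (Rule U)} (hgt : gtSel S₁ I J ↔ gtSel S₂ I J)
    (hagree : ∀ k, AgreeBelow S₁ k I J ↔ AgreeBelow S₂ k I J) :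
    gtSel (S₁ ∪ R) I J ↔ gtSel (S₂ ∪ R) I J := by
  simp only [gtSel_union_iff, hgt, hagree]

lemma gtSel_union_of_simSel (hR : simSel R I J) : gtSel (S ∪ R) I J ↔ gtSel S I J := by
  constructor
  · rintro ⟨r', hr' | hr', hlt, hle, heq⟩
    · exact ⟨r', hr', hlt, fun r hr => hle r (Or.inl hr), fun r hr => heq r (Or.inl hr)⟩
    · exact absurd (hR r' hr') hlt.ne
  · rintro ⟨r', hr', hlt, hle, heq⟩
    refine ⟨r', Or.inl hr', hlt, ?_, ?_⟩
    · rintro r (hr | hr) hrk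
      exacts [hle r hr hrk, (hR r hr).le]
    · rintro r (hr | hr) hrk
      exacts [heq r hr hrk, hR r hr]

lemma not_gtSel_of_lt {q : Rule U} (hq : q ∈ S) (hlt : degree J q < degree I q)
    (hbelow : AgreeBelow S q.rank I J) : ¬ gtSel S I J := by
  rintro ⟨r', hr', hlt', hle, heq⟩
  rcases lt_or_ge r'.rank q.rank with h | h
  · exact hlt'.ne (hbelow r' hr' h)
  rcases h.eq_or_lt with h | h
  · exact (hle q hq h).not_gt hlt
  · exact hlt.ne' (heq q hq h)

lemma gtSel_union_singleton {s : Rule U} (hS : AgreeBelow S (s.rank + 1) I J)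
    (hs : degree I s < degree J s) : gtSel (S ∪ {s}) I J := by
  refine ⟨s, Or.inr rfl, hs, ?_, ?_⟩
  · rintro r (hr | rfl) hrk
    exacts [(hS r hr (by omega)).le, hs.le]
  · rintro r (hr | rfl) hrk
    exacts [hS r hr (by omega), absurd hrk (lt_irrefl _)]

end Selector

def preferredIn (V : Set (Set U)) (S : Set (Rule U)) : Set (Set U) :=
  {I | I ∈ V ∧ ¬ ∃ J ∈ V, gtSel S J I}

def FormulasDetermine (F : Finset (Formula U)) (S : Set (Rule U)) : Prop :=
  ∀ K X, SatEquiv F K X → simSel S K X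

lemma FormulasDetermine.union {F : Finset (Formula U)} {S R : Set (Rule U)}
    (hS : FormulasDetermine F S) (hR : FormulasDetermine F R) : FormulasDetermine F (S ∪ R) :=
  fun K X h r hr => hr.elim (hS K X h r) (hR K X h r)

noncomputable def ruleFormulas (T : Finset (Rule U)) : Finset (Formula U) :=
  T.biUnion fun r => insert r.body r.head.toFinset

lemma formulasDetermine_ruleFormulas {T : Finset (Rule U)} {S : Set (Rule U)} (hST : S ⊆ T) :
    FormulasDetermine (ruleFormulas T) S := by
  intro K X h r hr
  have hrT : r ∈ T := hST hr
  exact degree_congr (h _ (Finset.mem_biUnion.2 ⟨r, hrT, Finset.mem_insert_self _ _⟩))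
    fun φ hφ => h _ (Finset.mem_biUnion.2 ⟨r, hrT, Finset.mem_insert_of_mem (List.mem_toFinset.2 hφ)⟩)

lemma formulasDetermine_prefer_literal {F : Finset (Formula U)} {ψ : Formula U} (hψ : ψ ∈ F)
    (Y : Set U) (ℓ : ℕ) (hℓ : 1 ≤ ℓ) : FormulasDetermine F {Rule.prefer (literal Y ψ) ℓ hℓ} := by
  rintro K X h r rfl
  simp only [degree_prefer, sat_literal, h ψ hψ]

noncomputable def filterRule (F : Finset (Formula U)) (I J : Set U) : Rule U :=
  Rule.prefer (.disj (characteristic F I) (characteristic F J)) 1 le_rfl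

lemma degree_filterRule (K : Set U) (F : Finset (Formula U)) (I J : Set U) :
    degree K (filterRule F I J) = if SatEquiv F K I ∨ SatEquiv F K J then 1 else 2 := by
  simp only [filterRule, degree_prefer, sat_disj, sat_characteristic]

section Filter

variable {F : Finset (Formula U)} {S : Set (Rule U)} {V : Set (Set U)} {I J K X : Set U}

lemma simSel_union_filterRule (hS : FormulasDetermine F S) (hK : SatEquiv F K X)
    (hX : X = I ∨ X = J) : simSel (S ∪ {filterRule F I J}) K X := by
  rintro r (hr | rfl)
  · exact hS K X hK r hr
  · rw [degree_filterRule, degree_filterRule, if_pos, if_pos]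
    · rcases hX with rfl | rfl
      exacts [Or.inl (SatEquiv.refl F X), Or.inr (SatEquiv.refl F X)]
    · rcases hX with rfl | rfl
      exacts [Or.inl hK, Or.inr hK]

lemma mem_preferredIn_union_filterRule_iff (hS : FormulasDetermine F S) (hI : I ∈ V)
    (hJ : J ∈ V) : J ∈ preferredIn V (S ∪ {filterRule F I J}) ↔ ¬ gtSel S I J := by
  have hsim : simSel {filterRule F I J} I J := by
    rintro r rfl
    rw [degree_filterRule, degree_filterRule, if_pos (Or.inl (SatEquiv.refl F I)),
      if_pos (Or.inr (SatEquiv.refl F J))]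
  rw [← gtSel_union_of_simSel hsim]
  constructor
  · exact fun ⟨_, hno⟩ hgt => hno ⟨I, hI, hgt⟩
  refine fun hno => ⟨hJ, ?_⟩
  rintro ⟨K, -, hK⟩
  by_cases hKI : SatEquiv F K I
  · exact hno (gtSel_of_simSel_left (simSel_union_filterRule hS hKI (Or.inl rfl)) hK)
  by_cases hKJ : SatEquiv F K J
  · exact gtSel_irrefl _ J (gtSel_of_simSel_left (simSel_union_filterRule hS hKJ (Or.inr rfl)) hK)
  refine not_gtSel_of_lt (Or.inr rfl) ?_ (agreeBelow_one _ _ _) hK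
  rw [degree_filterRule, degree_filterRule, if_pos (Or.inr (SatEquiv.refl F J)),
    if_neg (not_or.2 ⟨hKI, hKJ⟩)]
  exact Nat.one_lt_two

end Filter

section StrongEquivalence

variable {V V₁ V₂ : Set (Set U)} {S₁ S₂ : Set (Rule U)} {F : Finset (Formula U)}

lemma subset_of_preferredIn_union_eq
    (hH : ∀ R : Set (Rule U), R.Finite → preferredIn V₁ (S₁ ∪ R) = preferredIn V₂ (S₂ ∪ R))
    (hF : FormulasDetermine F S₁) : V₁ ⊆ V₂ := by
  intro I hI
  have hpref := (mem_preferredIn_union_filterRule_iff hF hI hI).2 (gtSel_irrefl S₁ I)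
  rw [hH _ (Set.finite_singleton _)] at hpref
  exact hpref.1

variable (hH : ∀ R : Set (Rule U), R.Finite → preferredIn V (S₁ ∪ R) = preferredIn V (S₂ ∪ R))
  (hF₁ : FormulasDetermine F S₁) (hF₂ : FormulasDetermine F S₂)
include hH hF₁ hF₂

lemma gtSel_union_iff_of_preferredIn_eq {R : Set (Rule U)} (hR : R.Finite)
    (hFR : FormulasDetermine F R) {I J : Set U} (hI : I ∈ V) (hJ : J ∈ V) :
    gtSel (S₁ ∪ R) I J ↔ gtSel (S₂ ∪ R) I J := by
  have h := hH (R ∪ {filterRule F I J}) (hR.union (Set.finite_singleton _))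
  rw [← Set.union_assoc, ← Set.union_assoc] at h
  rw [← not_iff_not, ← mem_preferredIn_union_filterRule_iff (hF₁.union hFR) hI hJ,
    ← mem_preferredIn_union_filterRule_iff (hF₂.union hFR) hI hJ, h]

lemma not_degree_lt_of_preferredIn_eq {I J : Set U} (hI : I ∈ V) (hJ : J ∈ V) {q : Rule U}
    (hq : q ∈ S₂) (h₁ : AgreeBelow S₁ (q.rank + 1) I J) (h₂ : AgreeBelow S₂ q.rank I J) :
    ¬ degree J q < degree I q := by
  intro hlt
  obtain ⟨ψ, hψ, hIJ⟩ : ∃ ψ ∈ F, ¬ (Sat I ψ ↔ Sat J ψ) := by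
    by_contra! h
    exact hlt.ne' (hF₂ I J h q hq)
  set s := Rule.prefer (literal I ψ) q.rank q.rank_pos
  have hs : degree I s < degree J s := by
    rw [degree_prefer, degree_prefer, if_pos (sat_literal.2 Iff.rfl),
      if_neg fun h => hIJ (sat_literal.1 h).symm]
    exact Nat.one_lt_two
  have hgt := (gtSel_union_iff_of_preferredIn_eq hH hF₁ hF₂ (Set.finite_singleton s)
    (formulasDetermine_prefer_literal hψ I _ _) hI hJ).1 (gtSel_union_singleton h₁ hs)
  refine not_gtSel_of_lt (Or.inl hq) hlt (agreeBelow_union.2 ⟨h₂, ?_⟩) hgt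
  rintro r rfl h
  exact absurd h (lt_irrefl _)

lemma agreeBelow_of_preferredIn_eq (k : ℕ) :
    ∀ I ∈ V, ∀ J ∈ V, AgreeBelow S₁ k I J → AgreeBelow S₂ k I J := by
  induction k with
  | zero => exact fun _ _ _ _ _ r _ h => absurd h (Nat.not_lt_zero _)
  | succ k ih =>
    intro I hI J hJ h₁ r hr hrk
    have h₂ := ih I hI J hJ (h₁.mono k.le_succ)
    rcases (Nat.lt_succ_iff.1 hrk).lt_or_eq with hlt | rfl
    · exact h₂ r hr hlt
    rcases lt_trichotomy (degree I r) (degree J r) with hlt | heq | hlt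
    · exact absurd hlt (not_degree_lt_of_preferredIn_eq hH hF₁ hF₂ hJ hI hr h₁.symm h₂.symm)
    · exact heq
    · exact absurd hlt (not_degree_lt_of_preferredIn_eq hH hF₁ hF₂ hI hJ hr h₁ h₂)

end StrongEquivalence

theorem preferredIn_union_eq_iff {V₁ V₂ : Set (Set U)} {S₁ S₂ : Set (Rule U)}
    (hS₁ : S₁.Finite) (hS₂ : S₂.Finite) :
    (∀ R : Set (Rule U), R.Finite → preferredIn V₁ (S₁ ∪ R) = preferredIn V₂ (S₂ ∪ R)) ↔
      V₁ = V₂ ∧ (∀ I ∈ V₁, ∀ J ∈ V₁, gtSel S₁ I J ↔ gtSel S₂ I J) ∧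
        ∀ I ∈ V₁, ∀ J ∈ V₁, ∀ k, AgreeBelow S₁ k I J ↔ AgreeBelow S₂ k I J := by
  constructor
  · intro hH
    set T := (hS₁.union hS₂).toFinset
    have hF₁ : FormulasDetermine (ruleFormulas T) S₁ :=
      formulasDetermine_ruleFormulas (by simp [T])
    have hF₂ : FormulasDetermine (ruleFormulas T) S₂ :=
      formulasDetermine_ruleFormulas (by simp [T])
    have hH' R hR := (hH R hR).symm
    obtain rfl : V₁ = V₂ :=
      (subset_of_preferredIn_union_eq hH hF₁).antisymm (subset_of_preferredIn_union_eq hH' hF₂)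
    refine ⟨rfl, fun I hI J hJ => ?_, fun I hI J hJ k =>
      ⟨agreeBelow_of_preferredIn_eq hH hF₁ hF₂ k I hI J hJ,
        agreeBelow_of_preferredIn_eq hH' hF₂ hF₁ k I hI J hJ⟩⟩
    simpa using gtSel_union_iff_of_preferredIn_eq hH hF₁ hF₂ Set.finite_empty
      (fun _ _ _ _ hr => hr.elim) hI hJ
  · rintro ⟨rfl, hgt, hagree⟩ R -
    ext J
    refine and_congr_right fun hJ => not_congr (exists_congr fun I => and_congr_right fun hI => ?_)
    exact gtSel_union_congr (hgt I hI J hJ) (hagree I hI J hJ)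

lemma natCast_le_diff_iff (P : OptProblem U) (I J : Set U) (k : ℕ) :
    (k : ℕ∞) ≤ diff P I J ↔ AgreeBelow P.sel k I J := by
  have hbelow (n : ℕ) : simSel (P.below n).sel I J ↔ AgreeBelow P.sel n I J :=
    ⟨fun h r hr hrn => h r ⟨hr, hrn⟩, fun h r hr => h r hr.1 hr.2⟩
  simp only [diff, hbelow]
  split_ifs with hall
  · simp [hall k]
  obtain ⟨n, hn⟩ := not_forall.1 hall
  have hbdd : BddAbove {n | AgreeBelow P.sel n I J} :=
    ⟨n, fun m hm => not_lt.1 fun hlt => hn (hm.mono hlt.le)⟩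
  rw [Nat.cast_le]
  exact ⟨fun hk => (Nat.sSup_mem ⟨0, fun r _ h => absurd h (Nat.not_lt_zero _)⟩ hbdd).mono hk,
    fun hk => le_csSup hbdd hk⟩

lemma diff_eq_diff_iff (P Q : OptProblem U) (I J : Set U) :
    diff P I J = diff Q I J ↔ ∀ k, AgreeBelow P.sel k I J ↔ AgreeBelow Q.sel k I J := by
  refine ⟨fun h k => ?_, fun h => ENat.eq_of_forall_natCast_le_iff fun k => ?_⟩
  · rw [← natCast_le_diff_iff, h, natCast_le_diff_iff]
  · rw [natCast_le_diff_iff, natCast_le_diff_iff, h]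

lemma restrictRel_eq_iff (rel rel' : Set U → Set U → Prop) (V : Set (Set U)) :
    restrictRel rel V = restrictRel rel' V ↔ ∀ A ∈ V, ∀ B ∈ V, rel A B ↔ rel' A B := by
  simp only [restrictRel, funext_iff, eq_iff_iff]
  refine ⟨fun h A hA B hB => by simpa [hA, hB] using h A B, fun h A B => ?_⟩
  by_cases hA : A ∈ V <;> by_cases hB : B ∈ V <;> simp [hA, hB, h]

lemma pref_union_of_gen_eq_empty (sem : Sem) (P : OptProblem U) {R : OptProblem U}
    (hR : R.gen = ∅) : pref sem (P.union R) = preferredIn (outcomes sem P) (P.sel ∪ R.sel) := by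
  have hgen : (P.union R).gen = P.gen := by simp [OptProblem.union, hR]
  have houtcomes : outcomes sem (P.union R) = outcomes sem P := by
    cases sem <;> simp only [outcomes, hgen]
  simp only [pref, preferredIn, houtcomes]
  rfl

lemma seqv_iff (sem : Sem) (P Q : OptProblem U) :
    seqv sem 1 ⊤ P Q ↔ ∀ R : Set (Rule U), R.Finite →
      preferredIn (outcomes sem P) (P.sel ∪ R) = preferredIn (outcomes sem Q) (Q.sel ∪ R) := by
  refine ⟨fun h R hR => ?_, fun h R hR _ => ?_⟩
  · have := h ⟨∅, R, hR⟩ rfl fun r _ => ⟨r.rank_pos, le_top⟩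
    rwa [pref_union_of_gen_eq_empty sem P rfl, pref_union_of_gen_eq_empty sem Q rfl] at this
  · rw [pref_union_of_gen_eq_empty sem P hR, pref_union_of_gen_eq_empty sem Q hR]
    exact h R.sel R.sel_finite

theorem stmt3_general {U : Type} (sem : Sem) (P Q : OptProblem U) :
    seqv sem 1 ⊤ P Q ↔
      (outcomes sem P = outcomes sem Q ∧
       restrictRel (gtSel P.sel) (outcomes sem P) =
         restrictRel (gtSel Q.sel) (outcomes sem Q) ∧
       (∀ I ∈ outcomes sem P, ∀ J ∈ outcomes sem P, diff P I J = diff Q I J)) := by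
  rw [seqv_iff, preferredIn_union_eq_iff P.sel_finite Q.sel_finite]
  refine and_congr_right fun hV => ?_
  rw [← hV, restrictRel_eq_iff]
  simp only [diff_eq_diff_iff]

/-- Corollary 4: characterization of `P ≡^s Q` (i.e. `P ≡^{s,[1,∞]} Q`). -/
theorem stmt3 {U : Type} [Countable U] (sem : Sem) (P Q : OptProblem U) :
    seqv sem 1 ⊤ P Q ↔
      (outcomes sem P = outcomes sem Q ∧
       restrictRel (gtSel P.sel) (outcomes sem P) =
         restrictRel (gtSel Q.sel) (outcomes sem Q) ∧
       (∀ I ∈ outcomes sem P, ∀ J ∈ outcomes sem P, diff P I J = diff Q I J)) :=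
  stmt3_general sem P Q
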